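/- arXiv:2206.01059 — 2 statements merged into one kernel-verified Lean document; each statement's English description precedes it below -/
import Mathlib

section
/- Let G be a finite non-abelian simple group with the property that every non-identity element of G lies in a 2-element generating set. Then the commuting graph of G is not isomorphic to a strong product of two graphs each having at least two vertices. -/
/-- The commuting graph of a group. -/
def commGraph (G : Type*) [Group G] : SimpleGraph G where
  Adj x y := x ≠ y ∧ x * y = y * x
  symm := ⟨by rintro x y ⟨h1, h2⟩; exact ⟨fun h => h1 h.symm, h2.symm⟩⟩
  loopless := ⟨by rintro x ⟨h, -⟩; exact h rfl⟩

/-- The strong product of two simple graphs: distinct pairs are adjacent iff in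
each coordinate the entries are equal or adjacent. -/
def strongProd {α β : Type*} (X : SimpleGraph α) (Y : SimpleGraph β) :
    SimpleGraph (α × β) where
  Adj a b := a ≠ b ∧ (a.1 = b.1 ∨ X.Adj a.1 b.1) ∧ (a.2 = b.2 ∨ Y.Adj a.2 b.2)
  symm := ⟨by
    rintro a b ⟨h1, h2, h3⟩
    exact ⟨fun h => h1 h.symm, h2.imp Eq.symm (fun h => X.adj_symm h),
      h3.imp Eq.symm (fun h => Y.adj_symm h)⟩⟩
  loopless := ⟨by rintro a ⟨h, -⟩; exact h rfl⟩

/-!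
The identity is a universal vertex of the commuting graph, so an isomorphism onto `A ⊠ B`
sends it to a pair `(u, v)` of universal vertices. Take `a ≠ u` and let `g` correspond to
`(a, v)`; by hypothesis `g` and some `h` generate `G`. The closed neighbourhood of `(a, v)`
is `N[a] × B`, and it meets that of any vertex `(c, d)` in `{u} × N[d]`, which has a vertex
`(u, f)` with `f ≠ v`. That vertex corresponds to a non-identity element commuting with `g`
and `h`, i.e. to a non-trivial central element, impossible in a non-abelian simple group.
-/

namespace SimpleGraph

variable {V W : Type*} {G : SimpleGraph V} {H : SimpleGraph W}

lemma IsUniversal.eq_or_adj {v : V} (hv : G.IsUniversal v) (w : V) : v = w ∨ G.Adj v w :=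
  or_iff_not_imp_left.mpr fun h => hv h

lemma IsUniversal.map_iso {v : V} (hv : G.IsUniversal v) (φ : G ≃g H) :
    H.IsUniversal (φ v) := by
  intro w hw
  rw [← φ.apply_symm_apply w, φ.map_adj_iff]
  exact hv fun h => hw (by rw [h, φ.apply_symm_apply])

lemma Iso.eq_or_adj_iff (φ : G ≃g H) {x y : V} :
    φ x = φ y ∨ H.Adj (φ x) (φ y) ↔ x = y ∨ G.Adj x y := by
  rw [φ.injective.eq_iff, φ.map_adj_iff]

lemma IsUniversal.exists_ne_eq_or_adj [Nontrivial V] {v : V} (hv : G.IsUniversal v) (d : V) :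
    ∃ f ≠ v, f = d ∨ G.Adj f d := by
  rcases eq_or_ne d v with rfl | hd
  · obtain ⟨f, hf⟩ := exists_ne d
    exact ⟨f, hf, Or.inr (hv hf.symm).symm⟩
  · exact ⟨d, hd, Or.inl rfl⟩

end SimpleGraph


section StrongProduct

variable {α β : Type*} {X : SimpleGraph α} {Y : SimpleGraph β}

lemma eq_or_strongProd_adj_iff {p q : α × β} :
    p = q ∨ (strongProd X Y).Adj p q ↔
      (p.1 = q.1 ∨ X.Adj p.1 q.1) ∧ (p.2 = q.2 ∨ Y.Adj p.2 q.2) := by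
  refine ⟨?_, fun h => (em (p = q)).imp_right fun hpq => ⟨hpq, h⟩⟩
  rintro (rfl | ⟨-, h⟩)
  exacts [⟨Or.inl rfl, Or.inl rfl⟩, h]

lemma SimpleGraph.IsUniversal.fst_of_strongProd {p : α × β}
    (hp : (strongProd X Y).IsUniversal p) :
    X.IsUniversal p.1 := fun a ha =>
  ((hp (w := (a, p.2)) fun h => ha (congrArg Prod.fst h)).2.1).resolve_left ha

lemma SimpleGraph.IsUniversal.snd_of_strongProd {p : α × β}
    (hp : (strongProd X Y).IsUniversal p) :
    Y.IsUniversal p.2 := fun b hb =>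
  ((hp (w := (p.1, b)) fun h => hb (congrArg Prod.snd h)).2.2).resolve_left hb

lemma exists_ne_common_neighbor_strongProd [Nontrivial β] {u : α} {v : β}
    (hu : X.IsUniversal u) (hv : Y.IsUniversal v) (a : α) (z : α × β) :
    ∃ y ≠ (u, v), (y = (a, v) ∨ (strongProd X Y).Adj y (a, v)) ∧
      (y = z ∨ (strongProd X Y).Adj y z) := by
  obtain ⟨f, hfv, hfz⟩ := hv.exists_ne_eq_or_adj z.2
  refine ⟨(u, f), fun h => hfv (congrArg Prod.snd h), ?_, ?_⟩ <;> rw [eq_or_strongProd_adj_iff]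
  exacts [⟨hu.eq_or_adj a, Or.inr (hv hfv.symm).symm⟩, ⟨hu.eq_or_adj z.1, hfz⟩]

end StrongProduct

section CommutingGraph

variable {G : Type*} [Group G]

lemma eq_or_commGraph_adj_iff {x y : G} : x = y ∨ (commGraph G).Adj x y ↔ Commute x y := by
  refine ⟨?_, fun h => (em (x = y)).imp_right fun hxy => ⟨hxy, h⟩⟩
  rintro (rfl | ⟨-, h⟩)
  exacts [Commute.refl x, h]

lemma commGraph_isUniversal_one : (commGraph G).IsUniversal 1 :=
  fun _ h => ⟨h, by rw [one_mul, mul_one]⟩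

end CommutingGraph

lemma IsSimpleGroup.center_eq_bot {G : Type*} [Group G] [IsSimpleGroup G]
    (hna : ∃ a b : G, a * b ≠ b * a) : Subgroup.center G = ⊥ := by
  refine (eq_bot_or_eq_top_of_normal _ inferInstance).resolve_right fun h => ?_
  obtain ⟨a, b, hab⟩ := hna
  exact hab (Subgroup.mem_center_iff.mp (h ▸ Subgroup.mem_top b) a)

lemma eq_one_of_commute_of_closure_pair_eq_top {G : Type*} [Group G]
    (hZ : Subgroup.center G = ⊥) {g h x : G} (hgh : Subgroup.closure {g, h} = ⊤)
    (hg : Commute x g) (hh : Commute x h) : x = 1 := by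
  have hx : x ∈ Subgroup.center G := by
    rw [Subgroup.center_eq_iInf hgh]
    simp only [Set.mem_insert_iff, Set.mem_singleton_iff, Subgroup.mem_iInf,
      Subgroup.mem_centralizer_singleton_iff, forall_eq_or_imp, forall_eq]
    exact ⟨hg.eq, hh.eq⟩
  rwa [hZ, Subgroup.mem_bot] at hx

lemma nontrivial_of_two_le_natCard {α : Type*} (h : 2 ≤ Nat.card α) : Nontrivial α :=
  have : Finite α := Nat.finite_of_card_ne_zero (by omega)
  Finite.one_lt_card_iff_nontrivial.mp h

theorem commGraph_simple_prime_general (G : Type) [Group G] [IsSimpleGroup G]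
    (hna : ∃ a b : G, a * b ≠ b * a)
    (hgen : ∀ g : G, g ≠ 1 → ∃ h : G, Subgroup.closure {g, h} = ⊤) :
    ∀ (α β : Type) (A : SimpleGraph α) (B : SimpleGraph β),
      2 ≤ Nat.card α → 2 ≤ Nat.card β →
      ¬ Nonempty (commGraph G ≃g strongProd A B) := by
  intro α β A B hα hβ ⟨φ⟩
  have : Nontrivial α := nontrivial_of_two_le_natCard hα
  have : Nontrivial β := nontrivial_of_two_le_natCard hβ
  have hp := commGraph_isUniversal_one.map_iso φ
  obtain ⟨a, ha⟩ := exists_ne (φ 1).1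
  set g := φ.symm (a, (φ 1).2)
  have hg : g ≠ 1 := fun h => ha (by rw [← h, φ.apply_symm_apply])
  obtain ⟨h, hgh⟩ := hgen g hg
  obtain ⟨y, hy, hyg, hyh⟩ :=
    exists_ne_common_neighbor_strongProd hp.fst_of_strongProd hp.snd_of_strongProd a (φ h)
  have hcomm : ∀ {x}, y = φ x ∨ (strongProd A B).Adj y (φ x) → Commute (φ.symm y) x := by
    intro x hx
    rwa [← eq_or_commGraph_adj_iff, ← φ.eq_or_adj_iff, φ.apply_symm_apply]
  have hy1 := eq_one_of_commute_of_closure_pair_eq_top (IsSimpleGroup.center_eq_bot hna) hgh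
    (hcomm (by rwa [φ.apply_symm_apply])) (hcomm hyh)
  exact hy (by rw [← hy1, φ.apply_symm_apply])

/-- The commuting graph of a finite non-abelian simple group (in which every
non-identity element lies in a 2-element generating set) is prime under the
strong product. -/
theorem commGraph_simple_prime (G : Type) [Group G] [Fintype G] [IsSimpleGroup G]
    (hna : ∃ a b : G, a * b ≠ b * a)
    (hgen : ∀ g : G, g ≠ 1 → ∃ h : G, Subgroup.closure {g, h} = ⊤) :
    ∀ (α β : Type) (A : SimpleGraph α) (B : SimpleGraph β),
      2 ≤ Nat.card α → 2 ≤ Nat.card β →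
      ¬ Nonempty (commGraph G ≃g strongProd A B) :=
  commGraph_simple_prime_general G hna hgen
end

section
/- Let G₁ and G₂ be finite isoclinic groups with |Z(G₁)| = |Z(G₂)|. Then the commuting graphs of G₁ and G₂ are isomorphic. -/
open scoped commutatorElement

def commGraphIsoOfCommuteIff {G₁ G₂ : Type*} [Group G₁] [Group G₂] (e : G₁ ≃ G₂)
    (he : ∀ x y, Commute (e x) (e y) ↔ Commute x y) : commGraph G₁ ≃g commGraph G₂ where
  toEquiv := e
  map_rel_iff' {x y} := and_congr e.injective.ne_iff (he x y)

theorem commute_iff_of_commutator_map {G₁ G₂ : Type*} [Group G₁] [Group G₂]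
    (ψ : commutator G₁ ≃* commutator G₂) {x y : G₁} {x' y' : G₂}
    (hψ : (ψ ⟨⁅x, y⁆, Subgroup.commutator_mem_commutator (Subgroup.mem_top x)
      (Subgroup.mem_top y)⟩ : G₂) = ⁅x', y'⁆) :
    Commute x y ↔ Commute x' y' := by
  rw [← commutatorElement_eq_one_iff_commute, ← commutatorElement_eq_one_iff_commute, ← hψ,
    OneMemClass.coe_eq_one, map_eq_one_iff ψ ψ.injective]
  exact (Subgroup.mk_eq_one _).symm

theorem Subgroup.exists_equiv_mk_eq {G₁ G₂ : Type*} [Group G₁] [Group G₂]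
    {H₁ : Subgroup G₁} {H₂ : Subgroup G₂} (φ : G₁ ⧸ H₁ ≃ G₂ ⧸ H₂) (f : H₁ ≃ H₂) :
    ∃ e : G₁ ≃ G₂, ∀ x, (e x : G₂ ⧸ H₂) = φ x := by
  let e₂ : G₂ ≃ (G₂ ⧸ H₂) × H₂ := groupEquivQuotientProdSubgroup
  refine ⟨groupEquivQuotientProdSubgroup.trans ((φ.prodCongr f).trans e₂.symm), fun x => ?_⟩
  exact congrArg Prod.fst (e₂.apply_symm_apply (φ x, _))

/-- Finite isoclinic groups with centers of equal order have isomorphic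
commuting graphs. -/
theorem isoclinic_commGraph_iso
    (G₁ G₂ : Type*) [Group G₁] [Group G₂] [Finite G₁] [Finite G₂]
    (hZ : Nat.card (Subgroup.center G₁) = Nat.card (Subgroup.center G₂))
    (hiso : ∃ (φ : (G₁ ⧸ Subgroup.center G₁) ≃* (G₂ ⧸ Subgroup.center G₂))
      (ψ : (commutator G₁) ≃* (commutator G₂)),
      ∀ (x y : G₁) (x' y' : G₂),
        φ (QuotientGroup.mk x) = QuotientGroup.mk x' →
        φ (QuotientGroup.mk y) = QuotientGroup.mk y' →
        (ψ ⟨⁅x, y⁆, Subgroup.commutator_mem_commutator (Subgroup.mem_top x)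
            (Subgroup.mem_top y)⟩ : G₂) = ⁅x', y'⁆) :
    Nonempty (commGraph G₁ ≃g commGraph G₂) := by
  obtain ⟨φ, ψ, hcompat⟩ := hiso
  obtain ⟨eZ⟩ := Finite.card_eq.mp hZ
  obtain ⟨e, he⟩ := Subgroup.exists_equiv_mk_eq φ.toEquiv eZ
  exact ⟨commGraphIsoOfCommuteIff e fun x y =>
    (commute_iff_of_commutator_map ψ (hcompat x y (e x) (e y) (he x).symm (he y).symm)).symm⟩
end
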